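/- arXiv:q-alg/9712041 — 2 statements merged into one kernel-verified Lean document; each statement's English description precedes it below -/
import Mathlib

section
/- There is a unique ℂ(q)-algebra homomorphism ι : Se_n(q) → G_n(q) which is the identity on the subalgebra G_n(q) ⊂ Se_n(q) and sends X_1 ↦ 1; moreover this homomorphism satisfies ι(X_k) = J_k for every k = 1,…,n, where J_k are the Jucys–Murphy elements. -/
/-!
Common definitions for formalizing "Affine Sergeev Algebra and q-Analogues of the
Young Symmetrizers for Projective Representations of the Symmetric Group"
by A. R. Jones and M. L. Nazarov.
-/

set_option maxHeartbeats 1600000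
set_option synthInstance.maxHeartbeats 1000000

noncomputable section
open scoped TensorProduct

namespace Sergeev

/-- The base field `ℂ(q)` of rational functions over `ℂ`. -/
abbrev K : Type := RatFunc ℂ

/-- The indeterminate `q`. -/
def qq : K := RatFunc.X

/-- `ε = q - q⁻¹`. -/
def eps : K := qq - qq⁻¹

/-! ## The Hecke–Clifford (Sergeev) algebra `G_n(q)`.

It is presented by generators `T_1, …, T_{n-1}` and `C_1, …, C_n`; we index generators by all
naturals and kill the out-of-range ones, which yields the same presented algebra. -/

/-- Generators: `t k` is the Hecke generator `T_k`, `c k` the Clifford generator `C_k`. -/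
inductive GGen : Type
  | t : ℕ → GGen
  | c : ℕ → GGen

abbrev FG : Type := FreeAlgebra K GGen

def Tf (k : ℕ) : FG := FreeAlgebra.ι K (GGen.t k)
def Cf (k : ℕ) : FG := FreeAlgebra.ι K (GGen.c k)

/-- The defining relations of `G_n(q)`. -/
inductive HCRel (n : ℕ) : FG → FG → Prop
  | t_out (k : ℕ) (h : ¬(1 ≤ k ∧ k + 1 ≤ n)) : HCRel n (Tf k) 0
  | c_out (k : ℕ) (h : ¬(1 ≤ k ∧ k ≤ n)) : HCRel n (Cf k) 0
  | quad (k : ℕ) (h1 : 1 ≤ k) (h2 : k + 1 ≤ n) :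
      HCRel n ((Tf k - algebraMap K FG qq) * (Tf k + algebraMap K FG qq⁻¹)) 0
  | braid (k : ℕ) (h1 : 1 ≤ k) (h2 : k + 2 ≤ n) :
      HCRel n (Tf k * Tf (k+1) * Tf k) (Tf (k+1) * Tf k * Tf (k+1))
  | t_comm (k l : ℕ) (h1 : 1 ≤ k) (h2 : k + 1 ≤ n) (h3 : 1 ≤ l) (h4 : l + 1 ≤ n)
      (h5 : l ≠ k) (h6 : l ≠ k + 1) (h7 : k ≠ l + 1) : HCRel n (Tf k * Tf l) (Tf l * Tf k)
  | c_sq (k : ℕ) (h1 : 1 ≤ k) (h2 : k ≤ n) : HCRel n (Cf k * Cf k) (-1)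
  | c_anti (k l : ℕ) (h1 : 1 ≤ k) (h2 : k ≤ n) (h3 : 1 ≤ l) (h4 : l ≤ n) (h5 : l ≠ k) :
      HCRel n (Cf k * Cf l) (-(Cf l * Cf k))
  | tc_k (k : ℕ) (h1 : 1 ≤ k) (h2 : k + 1 ≤ n) : HCRel n (Tf k * Cf k) (Cf (k+1) * Tf k)
  | tc_k1 (k : ℕ) (h1 : 1 ≤ k) (h2 : k + 1 ≤ n) :
      HCRel n (Tf k * Cf (k+1)) (Cf k * Tf k - eps • (Cf k - Cf (k+1)))
  | tc_out (k l : ℕ) (h1 : 1 ≤ k) (h2 : k + 1 ≤ n) (h3 : 1 ≤ l) (h4 : l ≤ n)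
      (h5 : l ≠ k) (h6 : l ≠ k + 1) : HCRel n (Tf k * Cf l) (Cf l * Tf k)

/-- The Hecke–Clifford (Sergeev) algebra `G_n(q)`. -/
abbrev HC (n : ℕ) : Type := RingQuot (HCRel n)

/-- The Hecke generator `T_k` of `G_n(q)`. -/
def T (n k : ℕ) : HC n := RingQuot.mkAlgHom K (HCRel n) (Tf k)

/-- The Clifford generator `C_k` of `G_n(q)`. -/
def C (n k : ℕ) : HC n := RingQuot.mkAlgHom K (HCRel n) (Cf k)

/-- The Jucys–Murphy elements `J_1 = 1`, `J_{k+1} = (T_k - ε C_k C_{k+1}) J_k T_k`. -/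
def J (n : ℕ) : ℕ → HC n
  | 0 => 1
  | 1 => 1
  | k + 1 => (T n k - eps • (C n k * C n (k+1))) * J n k * T n k

/-! ## The affine Sergeev algebra `Se_n(q)`. -/

/-- Generators of the affine Sergeev algebra: `t k`, `c k` as before, `x k` the affine
generator `X_k` and `xi k` its inverse `X_k⁻¹`. -/
inductive AGen : Type
  | t : ℕ → AGen
  | c : ℕ → AGen
  | x : ℕ → AGen
  | xi : ℕ → AGen

abbrev FS : Type := FreeAlgebra K AGen

def Ta (k : ℕ) : FS := FreeAlgebra.ι K (AGen.t k)
def Ca (k : ℕ) : FS := FreeAlgebra.ι K (AGen.c k)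
def Xa (k : ℕ) : FS := FreeAlgebra.ι K (AGen.x k)
def Ya (k : ℕ) : FS := FreeAlgebra.ι K (AGen.xi k)

/-- The defining relations of the affine Sergeev algebra `Se_n(q)`. -/
inductive SeRel (n : ℕ) : FS → FS → Prop
  | t_out (k : ℕ) (h : ¬(1 ≤ k ∧ k + 1 ≤ n)) : SeRel n (Ta k) 0
  | c_out (k : ℕ) (h : ¬(1 ≤ k ∧ k ≤ n)) : SeRel n (Ca k) 0
  | x_out (k : ℕ) (h : ¬(1 ≤ k ∧ k ≤ n)) : SeRel n (Xa k) 1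
  | xi_out (k : ℕ) (h : ¬(1 ≤ k ∧ k ≤ n)) : SeRel n (Ya k) 1
  | quad (k : ℕ) (h1 : 1 ≤ k) (h2 : k + 1 ≤ n) :
      SeRel n ((Ta k - algebraMap K FS qq) * (Ta k + algebraMap K FS qq⁻¹)) 0
  | braid (k : ℕ) (h1 : 1 ≤ k) (h2 : k + 2 ≤ n) :
      SeRel n (Ta k * Ta (k+1) * Ta k) (Ta (k+1) * Ta k * Ta (k+1))
  | t_comm (k l : ℕ) (h1 : 1 ≤ k) (h2 : k + 1 ≤ n) (h3 : 1 ≤ l) (h4 : l + 1 ≤ n)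
      (h5 : l ≠ k) (h6 : l ≠ k + 1) (h7 : k ≠ l + 1) : SeRel n (Ta k * Ta l) (Ta l * Ta k)
  | c_sq (k : ℕ) (h1 : 1 ≤ k) (h2 : k ≤ n) : SeRel n (Ca k * Ca k) (-1)
  | c_anti (k l : ℕ) (h1 : 1 ≤ k) (h2 : k ≤ n) (h3 : 1 ≤ l) (h4 : l ≤ n) (h5 : l ≠ k) :
      SeRel n (Ca k * Ca l) (-(Ca l * Ca k))
  | tc_k (k : ℕ) (h1 : 1 ≤ k) (h2 : k + 1 ≤ n) : SeRel n (Ta k * Ca k) (Ca (k+1) * Ta k)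
  | tc_k1 (k : ℕ) (h1 : 1 ≤ k) (h2 : k + 1 ≤ n) :
      SeRel n (Ta k * Ca (k+1)) (Ca k * Ta k - eps • (Ca k - Ca (k+1)))
  | tc_out (k l : ℕ) (h1 : 1 ≤ k) (h2 : k + 1 ≤ n) (h3 : 1 ≤ l) (h4 : l ≤ n)
      (h5 : l ≠ k) (h6 : l ≠ k + 1) : SeRel n (Ta k * Ca l) (Ca l * Ta k)
  | x_inv (k : ℕ) (h1 : 1 ≤ k) (h2 : k ≤ n) : SeRel n (Xa k * Ya k) 1
  | inv_x (k : ℕ) (h1 : 1 ≤ k) (h2 : k ≤ n) : SeRel n (Ya k * Xa k) 1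
  | x_comm (k l : ℕ) (h1 : 1 ≤ k) (h2 : k ≤ n) (h3 : 1 ≤ l) (h4 : l ≤ n) :
      SeRel n (Xa k * Xa l) (Xa l * Xa k)
  | tx_k (k : ℕ) (h1 : 1 ≤ k) (h2 : k + 1 ≤ n) :
      SeRel n (Ta k * Xa k) (Xa (k+1) * Ta k - eps • (Xa (k+1) - Ca k * Ca (k+1) * Xa k))
  | tx_k1 (k : ℕ) (h1 : 1 ≤ k) (h2 : k + 1 ≤ n) :
      SeRel n (Ta k * Xa (k+1)) (Xa k * Ta k + eps • ((1 + Ca k * Ca (k+1)) * Xa (k+1)))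
  | tx_out (k l : ℕ) (h1 : 1 ≤ k) (h2 : k + 1 ≤ n) (h3 : 1 ≤ l) (h4 : l ≤ n)
      (h5 : l ≠ k) (h6 : l ≠ k + 1) : SeRel n (Ta k * Xa l) (Xa l * Ta k)
  | cx_k (k : ℕ) (h1 : 1 ≤ k) (h2 : k ≤ n) : SeRel n (Ca k * Xa k) (Ya k * Ca k)
  | cx_out (k l : ℕ) (h1 : 1 ≤ k) (h2 : k ≤ n) (h3 : 1 ≤ l) (h4 : l ≤ n) (h5 : l ≠ k) :
      SeRel n (Ca k * Xa l) (Xa l * Ca k)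

/-- The affine Sergeev algebra `Se_n(q)`. -/
abbrev Se (n : ℕ) : Type := RingQuot (SeRel n)

def SeT (n k : ℕ) : Se n := RingQuot.mkAlgHom K (SeRel n) (Ta k)
def SeC (n k : ℕ) : Se n := RingQuot.mkAlgHom K (SeRel n) (Ca k)
def SeX (n k : ℕ) : Se n := RingQuot.mkAlgHom K (SeRel n) (Xa k)
def SeY (n k : ℕ) : Se n := RingQuot.mkAlgHom K (SeRel n) (Ya k)

/-! ### Auxiliary development -/

set_option linter.unusedSectionVars false

section Helpers

variable {A : Type*} [Monoid A]

lemma mul_mul_cancel {a b : A} (h : a * b = 1) (x : A) : a * (b * x) = x := by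
  rw [← mul_assoc, h, one_mul]

end Helpers

section CommHelpers

variable {A : Type*} [Ring A] [Algebra K A]

lemma comm_mul {a x y : A} (hx : a * x = x * a) (hy : a * y = y * a) :
    a * (x * y) = (x * y) * a := by
  rw [← mul_assoc, hx, mul_assoc, hy, ← mul_assoc]

lemma comm_sub {a x y : A} (hx : a * x = x * a) (hy : a * y = y * a) :
    a * (x - y) = (x - y) * a := by
  rw [mul_sub, sub_mul, hx, hy]

lemma comm_smul {a x : A} (r : K) (hx : a * x = x * a) :
    a * (r • x) = (r • x) * a := by
  rw [mul_smul_comm, smul_mul_assoc, hx]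

lemma comm_anti {a x y : A} (hx : a * x = -(x * a)) (hy : a * y = -(y * a)) :
    a * (x * y) = (x * y) * a := by
  have hx' : x * a = -(a * x) := by rw [hx, neg_neg]
  rw [← mul_assoc, hx, neg_mul, mul_assoc, hy, mul_neg, neg_neg, ← mul_assoc]

end CommHelpers

section HCLemmas

variable {n : ℕ}

private lemma hc_rel {x y : FG} (h : HCRel n x y) :
    RingQuot.mkAlgHom K (HCRel n) x = RingQuot.mkAlgHom K (HCRel n) y :=
  RingQuot.mkAlgHom_rel _ h

lemma mul_alg (r : K) (x : HC n) : x * algebraMap K (HC n) r = r • x := by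
  rw [Algebra.smul_def]; exact (Algebra.commutes r x).symm

lemma alg_mul (r : K) (x : HC n) : algebraMap K (HC n) r * x = r • x :=
  (Algebra.smul_def r x).symm

lemma qq_ne_zero : (qq : K) ≠ 0 := RatFunc.X_ne_zero

lemma T_out {k : ℕ} (h : ¬(1 ≤ k ∧ k + 1 ≤ n)) : T n k = 0 := by
  have h2 := hc_rel (HCRel.t_out (n := n) k h)
  simpa [T] using h2

lemma C_out {k : ℕ} (h : ¬(1 ≤ k ∧ k ≤ n)) : C n k = 0 := by
  have h2 := hc_rel (HCRel.c_out (n := n) k h)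
  simpa [C] using h2

lemma T_quad {k : ℕ} (h1 : 1 ≤ k) (h2 : k + 1 ≤ n) :
    (T n k - algebraMap K (HC n) qq) * (T n k + algebraMap K (HC n) qq⁻¹) = 0 := by
  have h := hc_rel (HCRel.quad (n := n) k h1 h2)
  simpa [T, map_mul, map_sub, map_add] using h

lemma t_sq {k : ℕ} (h1 : 1 ≤ k) (h2 : k + 1 ≤ n) :
    T n k * T n k = eps • T n k + 1 := by
  have h := T_quad h1 h2
  rw [sub_mul, mul_add, mul_add, mul_alg, alg_mul, ← map_mul,
    mul_inv_cancel₀ qq_ne_zero, map_one] at h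
  have h' : T n k * T n k + qq⁻¹ • T n k = qq • T n k + 1 := sub_eq_zero.mp h
  have h3 : T n k * T n k = (T n k * T n k + qq⁻¹ • T n k) - qq⁻¹ • T n k := by abel
  rw [h3, h', eps]
  rw [sub_smul qq (qq⁻¹) (T n k)]
  abel

end HCLemmas
section RQNeg

variable {R : Type} [Ring R] [Algebra K R] {rl : R → R → Prop}

lemma rq_neg_mul (x y : RingQuot rl) : -x * y = -(x * y) := neg_mul x y
lemma rq_mul_neg (x y : RingQuot rl) : x * -y = -(x * y) := mul_neg x y
lemma rq_neg_neg (x : RingQuot rl) : -(-x) = x := neg_neg x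
lemma rq_mul_neg_one (x : RingQuot rl) : x * (-1) = -x := mul_neg_one x
lemma rq_neg_one_mul (x : RingQuot rl) : (-1) * x = -x := neg_one_mul x
lemma rq_smul_neg (r : K) (x : RingQuot rl) : r • (-x) = -(r • x) := smul_neg r x
lemma rq_neg_smul (r : K) (x : RingQuot rl) : (-r) • x = -(r • x) := neg_smul r x
lemma rq_sub_smul (r s : K) (x : RingQuot rl) : (r - s) • x = r • x - s • x := sub_smul r s x

end RQNeg
lemma t_braid {k : ℕ} (h1 : 1 ≤ k) (h2 : k + 2 ≤ n) :
    T n k * T n (k+1) * T n k = T n (k+1) * T n k * T n (k+1) := by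
  have h := hc_rel (HCRel.braid (n := n) k h1 h2)
  simpa [T, map_mul] using h

lemma tt_comm {k l : ℕ} (h1 : 1 ≤ k) (h2 : k + 1 ≤ n) (h3 : 1 ≤ l) (h4 : l + 1 ≤ n)
    (h5 : l ≠ k) (h6 : l ≠ k + 1) (h7 : k ≠ l + 1) : T n k * T n l = T n l * T n k := by
  have h := hc_rel (HCRel.t_comm (n := n) k l h1 h2 h3 h4 h5 h6 h7)
  simpa [T, map_mul] using h

lemma c_sq {k : ℕ} (h1 : 1 ≤ k) (h2 : k ≤ n) : C n k * C n k = -1 := by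
  have h := hc_rel (HCRel.c_sq (n := n) k h1 h2)
  simpa [C, map_mul] using h

lemma cc_anti {k l : ℕ} (h1 : 1 ≤ k) (h2 : k ≤ n) (h3 : 1 ≤ l) (h4 : l ≤ n) (h5 : l ≠ k) :
    C n k * C n l = -(C n l * C n k) := by
  have h := hc_rel (HCRel.c_anti (n := n) k l h1 h2 h3 h4 h5)
  simpa [C, map_mul] using h

lemma tck {k : ℕ} (h1 : 1 ≤ k) (h2 : k + 1 ≤ n) :
    T n k * C n k = C n (k+1) * T n k := by
  have h := hc_rel (HCRel.tc_k (n := n) k h1 h2)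
  simpa [T, C, map_mul] using h

lemma tck1 {k : ℕ} (h1 : 1 ≤ k) (h2 : k + 1 ≤ n) :
    T n k * C n (k+1) = C n k * T n k - eps • (C n k - C n (k+1)) := by
  have h := hc_rel (HCRel.tc_k1 (n := n) k h1 h2)
  simpa [T, C, map_mul, map_sub, map_smul] using h

lemma tcl {k l : ℕ} (h1 : 1 ≤ k) (h2 : k + 1 ≤ n) (h3 : 1 ≤ l) (h4 : l ≤ n)
    (h5 : l ≠ k) (h6 : l ≠ k + 1) : T n k * C n l = C n l * T n k := by
  have h := hc_rel (HCRel.tc_out (n := n) k l h1 h2 h3 h4 h5 h6)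
  simpa [T, C, map_mul] using h

lemma t_tinv {k : ℕ} (h1 : 1 ≤ k) (h2 : k + 1 ≤ n) :
    T n k * (T n k - eps • 1) = 1 := by
  rw [mul_sub, t_sq h1 h2, mul_smul_comm, mul_one]; abel

lemma tinv_t {k : ℕ} (h1 : 1 ≤ k) (h2 : k + 1 ≤ n) :
    (T n k - eps • 1) * T n k = 1 := by
  rw [sub_mul, t_sq h1 h2, smul_mul_assoc, one_mul]; abel

lemma cc_sq {k : ℕ} (h1 : 1 ≤ k) (h2 : k + 1 ≤ n) :
    (C n k * C n (k+1)) * (C n k * C n (k+1)) = -1 := by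
  have hk : 1 ≤ k + 1 := le_add_self
  have hkn : k ≤ n := le_trans (Nat.le_succ k) h2
  have hdc : C n (k+1) * C n k = -(C n k * C n (k+1)) :=
    cc_anti hk h2 h1 hkn (Nat.ne_of_lt (Nat.lt_succ_self k))
  have hc := c_sq h1 hkn
  have hd := c_sq hk h2
  rw [mul_assoc, ← mul_assoc (C n (k+1)) (C n k) (C n (k+1)), hdc, rq_neg_mul, rq_mul_neg,
    mul_assoc (C n k) (C n (k+1)) (C n (k+1)), hd, rq_mul_neg_one, rq_mul_neg, hc, rq_neg_neg]

lemma tD {k : ℕ} (h1 : 1 ≤ k) (h2 : k + 1 ≤ n) :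
    T n k * (C n k * C n (k+1)) =
      -((C n k * C n (k+1)) * T n k) + eps • (C n k * C n (k+1)) - eps • 1 := by
  have hk : 1 ≤ k + 1 := le_add_self
  have hkn : k ≤ n := le_trans (Nat.le_succ k) h2
  have hdc : C n (k+1) * C n k = -(C n k * C n (k+1)) :=
    cc_anti hk h2 h1 hkn (Nat.ne_of_lt (Nat.lt_succ_self k))
  have hd := c_sq hk h2
  rw [← mul_assoc, tck h1 h2, mul_assoc, tck1 h1 h2, mul_sub, mul_smul_comm,
    ← mul_assoc (C n (k+1)) (C n k) (T n k), hdc,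
    mul_sub (C n (k+1)) (C n k) (C n (k+1)), hdc, hd]
  simp only [rq_neg_mul, smul_sub, rq_smul_neg, rq_neg_neg]
  abel

lemma Dt {k : ℕ} (h1 : 1 ≤ k) (h2 : k + 1 ≤ n) :
    (C n k * C n (k+1)) * T n k =
      -(T n k * (C n k * C n (k+1))) + eps • (C n k * C n (k+1)) - eps • 1 := by
  rw [tD h1 h2]
  abel
lemma mml {A : Type*} [Monoid A] {a b c d : A} (h : a * b = c * d) (x : A) :
    a * (b * x) = c * (d * x) := by rw [← mul_assoc, h, mul_assoc]

lemma mmln {R : Type} [Ring R] [Algebra K R] {rl : R → R → Prop}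
    {a b c d : RingQuot rl} (h : a * b = -(c * d)) (x : RingQuot rl) :
    a * (b * x) = -(c * (d * x)) := by rw [← mul_assoc, h, rq_neg_mul, mul_assoc]

lemma u_w {k : ℕ} (h1 : 1 ≤ k) (h2 : k + 1 ≤ n) :
    (T n k - eps • (C n k * C n (k+1))) * (T n k - eps • 1 - eps • (C n k * C n (k+1))) = 1 := by
  simp only [mul_sub, sub_mul, smul_mul_assoc, mul_smul_comm, mul_one, one_mul, smul_smul]
  rw [t_sq h1 h2, Dt h1 h2, cc_sq h1 h2]
  simp only [smul_sub, smul_add, rq_smul_neg, smul_smul, rq_mul_neg_one]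
  abel

lemma w_u {k : ℕ} (h1 : 1 ≤ k) (h2 : k + 1 ≤ n) :
    (T n k - eps • 1 - eps • (C n k * C n (k+1))) * (T n k - eps • (C n k * C n (k+1))) = 1 := by
  simp only [mul_sub, sub_mul, smul_mul_assoc, mul_smul_comm, mul_one, one_mul, smul_smul]
  rw [t_sq h1 h2, tD h1 h2, cc_sq h1 h2]
  simp only [smul_sub, smul_add, rq_smul_neg, smul_smul, rq_mul_neg_one]
  abel

lemma J_succ {k : ℕ} (hk : 1 ≤ k) :
    J n (k+1) = (T n k - eps • (C n k * C n (k+1))) * J n k * T n k := by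
  cases k with
  | zero => omega
  | succ m => rfl

/-- Inverses of the Jucys–Murphy elements. -/
def Jinv (n : ℕ) : ℕ → HC n
  | 0 => 1
  | 1 => 1
  | (k+2) => (T n (k+1) - eps • 1) * Jinv n (k+1)
      * (T n (k+1) - eps • 1 - eps • (C n (k+1) * C n (k+1+1)))

lemma Jinv_succ {k : ℕ} (hk : 1 ≤ k) :
    Jinv n (k+1) = (T n k - eps • 1) * Jinv n k
      * (T n k - eps • 1 - eps • (C n k * C n (k+1))) := by
  cases k with
  | zero => omega
  | succ m => rfl

lemma J_one : J n 1 = 1 := rfl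
lemma J_zero : J n 0 = 1 := rfl
lemma Jinv_one : Jinv n 1 = 1 := rfl
lemma Jinv_zero : Jinv n 0 = 1 := rfl

lemma JJinv_aux : ∀ k, k ≤ n → J n k * Jinv n k = 1 ∧ Jinv n k * J n k = 1 := by
  intro k
  induction k with
  | zero => intro _; rw [J_zero, Jinv_zero]; simp
  | succ k ih =>
    intro hk
    rcases Nat.eq_zero_or_pos k with h0 | hk1
    · subst h0; rw [J_one, Jinv_one]; simp
    · have hkk : k ≤ n := by omega
      obtain ⟨hji, hij⟩ := ih hkk
      rw [J_succ hk1, Jinv_succ hk1]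
      constructor
      · calc (T n k - eps • (C n k * C n (k+1))) * J n k * T n k *
              ((T n k - eps • 1) * Jinv n k * (T n k - eps • 1 - eps • (C n k * C n (k+1))))
            = (T n k - eps • (C n k * C n (k+1))) * (J n k * (T n k * ((T n k - eps • 1) *
              (Jinv n k * (T n k - eps • 1 - eps • (C n k * C n (k+1))))))) := by
              simp only [mul_assoc]
          _ = (T n k - eps • (C n k * C n (k+1))) * (J n k *
              (Jinv n k * (T n k - eps • 1 - eps • (C n k * C n (k+1))))) := by
              rw [mul_mul_cancel (t_tinv hk1 hk)]
          _ = (T n k - eps • (C n k * C n (k+1))) *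
              (T n k - eps • 1 - eps • (C n k * C n (k+1))) := by
              rw [mul_mul_cancel hji]
          _ = 1 := u_w hk1 hk
      · calc (T n k - eps • 1) * Jinv n k * (T n k - eps • 1 - eps • (C n k * C n (k+1))) *
              ((T n k - eps • (C n k * C n (k+1))) * J n k * T n k)
            = (T n k - eps • 1) * (Jinv n k * ((T n k - eps • 1 - eps • (C n k * C n (k+1))) *
              ((T n k - eps • (C n k * C n (k+1))) * (J n k * T n k)))) := by
              simp only [mul_assoc]
          _ = (T n k - eps • 1) * (Jinv n k * (J n k * T n k)) := by
              rw [mul_mul_cancel (w_u hk1 hk)]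
          _ = (T n k - eps • 1) * T n k := by rw [mul_mul_cancel hij]
          _ = 1 := tinv_t hk1 hk

lemma J_Jinv {k : ℕ} (h : k ≤ n) : J n k * Jinv n k = 1 := (JJinv_aux k h).1
lemma Jinv_J {k : ℕ} (h : k ≤ n) : Jinv n k * J n k = 1 := (JJinv_aux k h).2

lemma JcJ : ∀ k, 1 ≤ k → k ≤ n → J n k * (C n k * J n k) = C n k := by
  intro k
  induction k with
  | zero => omega
  | succ k ih =>
    intro _ hk
    rcases Nat.eq_zero_or_pos k with h0 | hk1
    · subst h0; rw [J_one]; simp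
    · have hkk : k ≤ n := by omega
      have hic := ih hk1 hkk
      have hdc : C n (k+1) * C n k = -(C n k * C n (k+1)) :=
        cc_anti le_add_self hk hk1 hkk (Nat.ne_of_lt (Nat.lt_succ_self k))
      have hd := c_sq (le_add_self : 1 ≤ k+1) hk
      have hc := c_sq hk1 hkk
      have hdu : C n (k+1) * (T n k - eps • (C n k * C n (k+1))) = (T n k - eps • 1) * C n k := by
        rw [mul_sub, mul_smul_comm, ← mul_assoc (C n (k+1)) (C n k) (C n (k+1)), hdc,
          rq_neg_mul, mul_assoc (C n k) (C n (k+1)) (C n (k+1)), hd, rq_mul_neg_one, rq_neg_neg,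
          ← tck hk1 hk, sub_mul, smul_mul_assoc, one_mul]
      have huc : (T n k - eps • (C n k * C n (k+1))) * C n k = C n (k+1) * (T n k - eps • 1) := by
        rw [sub_mul, smul_mul_assoc, mul_assoc (C n k) (C n (k+1)) (C n k), hdc,
          rq_mul_neg, ← mul_assoc (C n k) (C n k) (C n (k+1)), hc, rq_neg_one_mul, rq_neg_neg,
          tck hk1 hk, mul_sub, mul_smul_comm, mul_one]
      rw [J_succ hk1]
      calc (T n k - eps • (C n k * C n (k+1))) * J n k * T n k *
            (C n (k+1) * ((T n k - eps • (C n k * C n (k+1))) * J n k * T n k))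
          = (T n k - eps • (C n k * C n (k+1))) * (J n k * (T n k *
            (C n (k+1) * ((T n k - eps • (C n k * C n (k+1))) * (J n k * T n k))))) := by
            simp only [mul_assoc]
        _ = (T n k - eps • (C n k * C n (k+1))) * (J n k * (T n k *
            ((T n k - eps • 1) * (C n k * (J n k * T n k))))) := by
            rw [← mul_assoc (C n (k+1)) (T n k - eps • (C n k * C n (k+1))) (J n k * T n k),
              hdu, mul_assoc]
        _ = (T n k - eps • (C n k * C n (k+1))) * (J n k * (C n k * (J n k * T n k))) := by
            rw [mul_mul_cancel (t_tinv hk1 hk)]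
        _ = (T n k - eps • (C n k * C n (k+1))) * ((J n k * (C n k * J n k)) * T n k) := by
            simp only [mul_assoc]
        _ = (T n k - eps • (C n k * C n (k+1))) * (C n k * T n k) := by rw [hic]
        _ = (C n (k+1) * (T n k - eps • 1)) * T n k := by rw [← mul_assoc, huc]
        _ = C n (k+1) := by rw [mul_assoc, tinv_t hk1 hk, mul_one]

lemma hA {k : ℕ} (h1 : 1 ≤ k) (h2 : k + 1 ≤ n) :
    T n k * J n k = J n (k+1) * T n k
      - eps • (J n (k+1) - C n k * C n (k+1) * J n k) := by
  rw [J_succ h1, mul_assoc ((T n k - eps • (C n k * C n (k+1))) * J n k) (T n k) (T n k),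
    t_sq h1 h2]
  simp only [mul_add, mul_smul_comm, mul_one, smul_sub, sub_mul, smul_mul_assoc, mul_assoc]
  abel

lemma hB {k : ℕ} (h1 : 1 ≤ k) (h2 : k + 1 ≤ n) :
    T n k * J n (k+1) = J n k * T n k
      + eps • ((1 + C n k * C n (k+1)) * J n (k+1)) := by
  have E1 : T n k * (T n k * (J n k * T n k))
      = eps • (T n k * (J n k * T n k)) + J n k * T n k := by
    rw [← mul_assoc, t_sq h1 h2, add_mul, smul_mul_assoc, one_mul]
  have E2 : T n k * (C n k * (C n (k+1) * (J n k * T n k)))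
      = -(C n k * (C n (k+1) * (T n k * (J n k * T n k))))
        + eps • (C n k * (C n (k+1) * (J n k * T n k))) - eps • (J n k * T n k) := by
    rw [← mul_assoc (C n k) (C n (k+1)) (J n k * T n k),
      ← mul_assoc (T n k) (C n k * C n (k+1)) (J n k * T n k), tD h1 h2]
    simp only [sub_mul, add_mul, rq_neg_mul, smul_mul_assoc, one_mul, mul_assoc]
  have E3 : C n k * (C n (k+1) * (C n k * (C n (k+1) * (J n k * T n k))))
      = -(J n k * T n k) := by
    rw [← mul_assoc (C n k) (C n (k+1)) (J n k * T n k),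
      ← mul_assoc (C n k) (C n (k+1)) ((C n k * C n (k+1)) * (J n k * T n k)),
      ← mul_assoc (C n k * C n (k+1)) (C n k * C n (k+1)) (J n k * T n k),
      cc_sq h1 h2, rq_neg_one_mul]
  rw [J_succ h1]
  simp only [mul_sub, sub_mul, mul_add, add_mul, one_mul, mul_one, smul_mul_assoc,
    mul_smul_comm, smul_smul, smul_sub, smul_add, mul_assoc]
  rw [E1, E2, E3]
  simp only [smul_sub, smul_add, rq_smul_neg, smul_smul]
  abel
lemma avu {k : ℕ} (h1 : 1 ≤ k) (h2 : k + 2 ≤ n) :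
    T n k * ((T n (k+1) - eps • (C n (k+1) * C n (k+2))) * (T n k - eps • (C n k * C n (k+1))))
      = (T n (k+1) - eps • (C n (k+1) * C n (k+2)))
        * ((T n k - eps • (C n k * C n (k+1))) * T n (k+1)) := by
  have hk1 : 1 ≤ k + 1 := le_add_self
  have hk2 : 1 ≤ k + 2 := le_add_self
  have hkn : k ≤ n := by omega
  have hk1n : k + 1 ≤ n := by omega
  have hbc : T n (k+1) * C n k = C n k * T n (k+1) :=
    tcl hk1 h2 h1 hkn (by omega) (by omega)
  have hbd : T n (k+1) * C n (k+1) = C n (k+2) * T n (k+1) := tck hk1 h2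
  have hac : T n k * C n k = C n (k+1) * T n k := tck h1 hk1n
  have had : T n k * C n (k+1) = C n k * T n k - eps • (C n k - C n (k+1)) := tck1 h1 hk1n
  have hae : T n k * C n (k+2) = C n (k+2) * T n k :=
    tcl h1 hk1n hk2 h2 (by omega) (by omega)
  have hdc : C n (k+1) * C n k = -(C n k * C n (k+1)) :=
    cc_anti hk1 hk1n h1 hkn (by omega)
  have hec : C n (k+2) * C n k = -(C n k * C n (k+2)) :=
    cc_anti hk2 h2 h1 hkn (by omega)
  have hed : C n (k+2) * C n (k+1) = -(C n (k+1) * C n (k+2)) :=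
    cc_anti hk2 h2 hk1 hk1n (by omega)
  have hd : C n (k+1) * C n (k+1) = -1 := c_sq hk1 hk1n
  have haa : T n k * T n k = eps • T n k + 1 := t_sq h1 hk1n
  have hbb : T n (k+1) * T n (k+1) = eps • T n (k+1) + 1 := t_sq hk1 h2
  have G3 : T n (k+1) * (T n k * T n (k+1)) = T n k * (T n (k+1) * T n k) := by
    have h := t_braid h1 h2
    simp only [mul_assoc] at h
    exact h.symm
  have F1 : T n k * (T n (k+1) * (C n k * C n (k+1)))
      = C n (k+1) * (C n (k+2) * (T n k * T n (k+1))) := by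
    rw [mml hbc, hbd, mml hac, mml hae]
  have F2 : T n k * (C n (k+1) * (C n (k+2) * T n k))
      = C n k * C n (k+2) + eps • (C n (k+1) * (C n (k+2) * T n k)) := by
    rw [← mul_assoc (T n k) (C n (k+1)) (C n (k+2) * T n k), had, sub_mul, smul_mul_assoc,
      sub_mul, mul_assoc, mml hae, haa]
    simp only [mul_add, mul_smul_comm, mul_one, smul_sub, mul_assoc]
    try abel
  have F3 : T n k * (C n (k+1) * (C n (k+2) * (C n k * C n (k+1))))
      = C n (k+1) * (C n (k+2) * T n k) := by
    rw [mmln hec (C n (k+1)), hed, rq_mul_neg (C n k) (C n (k+1) * C n (k+2)), rq_neg_neg,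
      mmln hdc (C n (k+1) * C n (k+2)),
      ← mul_assoc (C n (k+1)) (C n (k+1)) (C n (k+2)), hd, rq_neg_one_mul,
      rq_mul_neg (C n k) (C n (k+2)), rq_neg_neg,
      ← mul_assoc (T n k) (C n k) (C n (k+2)), hac, mul_assoc, hae]
  have G1 : T n (k+1) * (C n k * (C n (k+1) * T n (k+1)))
      = eps • (C n k * (C n (k+2) * T n (k+1))) + C n k * C n (k+2) := by
    rw [mml hbc, mml hbd, hbb]
    simp only [mul_add, mul_smul_comm, mul_one]
    try abel
  have G2 : C n (k+1) * (C n (k+2) * (C n k * (C n (k+1) * T n (k+1))))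
      = C n k * (C n (k+2) * T n (k+1)) := by
    rw [mmln hec (C n (k+1) * T n (k+1)),
      rq_mul_neg (C n (k+1)) (C n k * (C n (k+2) * (C n (k+1) * T n (k+1)))),
      mmln hed (T n (k+1)),
      rq_mul_neg (C n k) (C n (k+1) * (C n (k+2) * T n (k+1))),
      rq_mul_neg (C n (k+1)) (C n k * (C n (k+1) * (C n (k+2) * T n (k+1)))), rq_neg_neg,
      mmln hdc (C n (k+1) * (C n (k+2) * T n (k+1))),
      ← mul_assoc (C n (k+1)) (C n (k+1)) (C n (k+2) * T n (k+1)), hd, rq_neg_one_mul,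
      rq_mul_neg (C n k) (C n (k+2) * T n (k+1)), rq_neg_neg]
  simp only [mul_sub, sub_mul, mul_smul_comm, smul_mul_assoc, smul_smul, mul_assoc]
  rw [F1, F2, F3, G1, G2, G3]
  simp only [smul_add, smul_sub, smul_smul]
  abel

lemma tJ_comm : ∀ l m : ℕ, 1 ≤ m → m + 1 ≤ n → 1 ≤ l → l ≤ n → l ≠ m → l ≠ m + 1 →
    T n m * J n l = J n l * T n m := by
  intro l
  induction l using Nat.strong_induction_on with
  | _ l ih =>
  intro m hm1 hmn hl1 hln hlm hlm1
  cases l with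
  | zero => omega
  | succ k =>
    rcases Nat.eq_zero_or_pos k with rfl | hk1
    · simp only [Nat.zero_add]
      rw [J_one, mul_one, one_mul]
    · have hkn : k + 1 ≤ n := hln
      rw [J_succ hk1]
      rcases Nat.lt_trichotomy (k+1) m with hlt | heq | hgt
      · -- l < m
        have h1 : T n m * T n k = T n k * T n m :=
          tt_comm hm1 hmn hk1 hkn (by omega) (by omega) (by omega)
        have h2 : T n m * C n k = C n k * T n m :=
          tcl hm1 hmn hk1 (by omega) (by omega) (by omega)
        have h3 : T n m * C n (k+1) = C n (k+1) * T n m :=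
          tcl hm1 hmn (by omega) (by omega) (by omega) (by omega)
        have h4 : T n m * J n k = J n k * T n m :=
          ih k (by omega) m hm1 hmn hk1 (by omega) (by omega) (by omega)
        exact comm_mul (comm_mul (comm_sub h1 (comm_smul eps (comm_mul h2 h3))) h4) h1
      · omega
      · rcases Nat.lt_or_ge (m+1) k with hgt2 | hle
        · -- l ≥ m+3
          have h1 : T n m * T n k = T n k * T n m :=
            tt_comm hm1 hmn hk1 hkn (by omega) (by omega) (by omega)
          have h2 : T n m * C n k = C n k * T n m :=
            tcl hm1 hmn hk1 (by omega) (by omega) (by omega)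
          have h3 : T n m * C n (k+1) = C n (k+1) * T n m :=
            tcl hm1 hmn (by omega) (by omega) (by omega) (by omega)
          have h4 : T n m * J n k = J n k * T n m :=
            ih k (by omega) m hm1 hmn hk1 (by omega) (by omega) (by omega)
          exact comm_mul (comm_mul (comm_sub h1 (comm_smul eps (comm_mul h2 h3))) h4) h1
        · -- l = m + 2, i.e. k = m + 1
          have hk : k = m + 1 := by omega
          subst hk
          have hm2n : m + 2 ≤ n := hkn
          have hbJ : T n (m+1) * J n m = J n m * T n (m+1) :=
            ih m (by omega) (m+1) (by omega) hm2n hm1 (by omega) (by omega) (by omega)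
          have havu := avu hm1 hm2n
          have hbr : T n (m+1) * (T n m * T n (m+1)) = T n m * (T n (m+1) * T n m) := by
            have h := t_braid hm1 hm2n
            simp only [mul_assoc] at h
            exact h.symm
          rw [J_succ hm1]
          calc T n m * ((T n (m+1) - eps • (C n (m+1) * C n (m+2)))
                * ((T n m - eps • (C n m * C n (m+1))) * J n m * T n m) * T n (m+1))
              = (T n m * ((T n (m+1) - eps • (C n (m+1) * C n (m+2)))
                  * (T n m - eps • (C n m * C n (m+1)))))
                * (J n m * (T n m * T n (m+1))) := by
                simp only [mul_assoc]
            _ = ((T n (m+1) - eps • (C n (m+1) * C n (m+2)))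
                  * ((T n m - eps • (C n m * C n (m+1))) * T n (m+1)))
                * (J n m * (T n m * T n (m+1))) := by rw [havu]
            _ = (T n (m+1) - eps • (C n (m+1) * C n (m+2)))
                * ((T n m - eps • (C n m * C n (m+1)))
                  * (T n (m+1) * (J n m * (T n m * T n (m+1))))) := by
                simp only [mul_assoc]
            _ = (T n (m+1) - eps • (C n (m+1) * C n (m+2)))
                * ((T n m - eps • (C n m * C n (m+1)))
                  * (J n m * (T n (m+1) * (T n m * T n (m+1))))) := by
                rw [← mul_assoc (T n (m+1)) (J n m) (T n m * T n (m+1)), hbJ, mul_assoc]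
            _ = (T n (m+1) - eps • (C n (m+1) * C n (m+2)))
                * ((T n m - eps • (C n m * C n (m+1)))
                  * (J n m * (T n m * (T n (m+1) * T n m)))) := by rw [hbr]
            _ = (T n (m+1) - eps • (C n (m+1) * C n (m+2)))
                * ((T n m - eps • (C n m * C n (m+1))) * J n m * T n m) * T n (m+1)
                * T n m := by simp only [mul_assoc]
lemma cJ_comm : ∀ l i : ℕ, 1 ≤ i → i ≤ n → 1 ≤ l → l ≤ n → i ≠ l →
    C n i * J n l = J n l * C n i := by
  intro l
  induction l using Nat.strong_induction_on with
  | _ l ih =>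
  intro i hi1 hin hl1 hln hil
  cases l with
  | zero => omega
  | succ k =>
    rcases Nat.eq_zero_or_pos k with rfl | hk1
    · simp only [Nat.zero_add]
      rw [J_one, mul_one, one_mul]
    · have hkn : k + 1 ≤ n := hln
      have hkk : k ≤ n := by omega
      rw [J_succ hk1]
      by_cases hik : i = k
      · -- the hard case i = k
        subst hik
        have hc2J : C n (i+1) * J n i = J n i * C n (i+1) :=
          ih i (by omega) (i+1) (by omega) hkn hk1 hkk (by omega)
        have hc : C n i * C n i = -1 := c_sq hi1 hkk
        have hd : C n (i+1) * C n (i+1) = -1 := c_sq (by omega) hkn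
        have htc : T n i * C n i = C n (i+1) * T n i := tck hk1 hkn
        have hct' : C n i * T n i = T n i * C n (i+1) + eps • C n i - eps • C n (i+1) := by
          rw [tck1 hk1 hkn]
          simp only [smul_sub]
          abel
        have hcu : C n i * (T n i - eps • (C n i * C n (i+1)))
            = T n i * C n (i+1) + eps • C n i := by
          rw [mul_sub, mul_smul_comm, ← mul_assoc (C n i) (C n i) (C n (i+1)), hc,
            rq_neg_one_mul, rq_smul_neg, hct']
          abel
        have huc2 : (T n i - eps • (C n i * C n (i+1))) * C n (i+1)
            = C n i * T n i + eps • C n (i+1) := by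
          rw [sub_mul, smul_mul_assoc, mul_assoc, hd, rq_mul_neg_one, rq_smul_neg,
            tck1 hk1 hkn]
          simp only [smul_sub]
          abel
        rw [mul_assoc (T n i - eps • (C n i * C n (i+1))) (J n i) (T n i)]
        have hL : C n i * ((T n i - eps • (C n i * C n (i+1))) * (J n i * T n i))
            = T n i * (C n (i+1) * (J n i * T n i)) + eps • (C n i * (J n i * T n i)) := by
          rw [← mul_assoc, hcu, add_mul, smul_mul_assoc, mul_assoc]
        have hR : ((T n i - eps • (C n i * C n (i+1))) * (J n i * T n i)) * C n i
            = T n i * (C n (i+1) * (J n i * T n i)) + eps • (C n i * (J n i * T n i)) := by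
          calc ((T n i - eps • (C n i * C n (i+1))) * (J n i * T n i)) * C n i
              = (T n i - eps • (C n i * C n (i+1))) * (J n i * (T n i * C n i)) := by
                simp only [mul_assoc]
            _ = (T n i - eps • (C n i * C n (i+1))) * (J n i * (C n (i+1) * T n i)) := by
                rw [htc]
            _ = (T n i - eps • (C n i * C n (i+1))) * (C n (i+1) * (J n i * T n i)) := by
                rw [← mul_assoc (J n i) (C n (i+1)) (T n i), ← hc2J, mul_assoc]
            _ = ((T n i - eps • (C n i * C n (i+1))) * C n (i+1)) * (J n i * T n i) := by
                rw [← mul_assoc]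
            _ = (C n i * T n i + eps • C n (i+1)) * (J n i * T n i) := by rw [huc2]
            _ = (C n i * T n i) * (J n i * T n i) + eps • (C n (i+1) * (J n i * T n i)) := by
                rw [add_mul, smul_mul_assoc]
            _ = (T n i * C n (i+1) + eps • C n i - eps • C n (i+1)) * (J n i * T n i)
                + eps • (C n (i+1) * (J n i * T n i)) := by rw [hct']
            _ = T n i * (C n (i+1) * (J n i * T n i)) + eps • (C n i * (J n i * T n i))
                - eps • (C n (i+1) * (J n i * T n i))
                + eps • (C n (i+1) * (J n i * T n i)) := by
                rw [sub_mul, add_mul, smul_mul_assoc, smul_mul_assoc, mul_assoc]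
            _ = T n i * (C n (i+1) * (J n i * T n i)) + eps • (C n i * (J n i * T n i)) := by
                abel
        rw [hL, hR]
      · -- easy case : i ≠ k, i ≠ k+1
        have hik1 : i ≠ k + 1 := hil
        have h1 : C n i * T n k = T n k * C n i := (tcl hk1 hkn hi1 hin hik hik1).symm
        have h2 : C n i * C n k = -(C n k * C n i) :=
          cc_anti hi1 hin hk1 hkk (fun h => hik h.symm)
        have h3 : C n i * C n (k+1) = -(C n (k+1) * C n i) :=
          cc_anti hi1 hin (by omega) hkn (fun h => hik1 h.symm)
        have h4 : C n i * J n k = J n k * C n i :=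
          ih k (by omega) i hi1 hin hk1 hkk hik
        exact comm_mul (comm_mul (comm_sub h1 (comm_smul eps (comm_anti h2 h3))) h4) h1

lemma JJ_aux : ∀ l k : ℕ, l < k → 1 ≤ k → k ≤ n → J n l * J n k = J n k * J n l := by
  intro l
  induction l using Nat.strong_induction_on with
  | _ l ih =>
  intro k hlk hk1 hkn
  cases l with
  | zero => rw [J_zero, one_mul, mul_one]
  | succ m =>
    rcases Nat.eq_zero_or_pos m with rfl | hm1
    · simp only [Nat.zero_add]
      rw [J_one, one_mul, mul_one]
    · have hmn : m + 1 ≤ n := by omega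
      rw [J_succ hm1]
      have h1 : J n k * T n m = T n m * J n k :=
        (tJ_comm k m hm1 hmn hk1 hkn (by omega) (by omega)).symm
      have h2 : J n k * C n m = C n m * J n k :=
        (cJ_comm k m hm1 (by omega) hk1 hkn (by omega)).symm
      have h3 : J n k * C n (m+1) = C n (m+1) * J n k :=
        (cJ_comm k (m+1) (by omega) (by omega) hk1 hkn (by omega)).symm
      have h4 : J n k * J n m = J n m * J n k :=
        (ih m (by omega) k (by omega) hk1 hkn).symm
      exact (comm_mul (comm_mul (comm_sub h1 (comm_smul eps (comm_mul h2 h3))) h4) h1).symm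

lemma JJ_comm {k l : ℕ} (hk : k ≤ n) (hl : l ≤ n) : J n k * J n l = J n l * J n k := by
  rcases lt_trichotomy k l with h | h | h
  · exact JJ_aux k l h (by omega) hl
  · rw [h]
  · exact (JJ_aux l k h (by omega) hk).symm

lemma cJk {k : ℕ} (h1 : 1 ≤ k) (h2 : k ≤ n) :
    C n k * J n k = Jinv n k * C n k := by
  calc C n k * J n k = (Jinv n k * J n k) * (C n k * J n k) := by rw [Jinv_J h2, one_mul]
    _ = Jinv n k * (J n k * (C n k * J n k)) := by simp only [mul_assoc]
    _ = Jinv n k * C n k := by rw [JcJ k h1 h2]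


section SeLemmas

variable {n : ℕ}

private lemma se_rel {x y : FS} (h : SeRel n x y) :
    RingQuot.mkAlgHom K (SeRel n) x = RingQuot.mkAlgHom K (SeRel n) y :=
  RingQuot.mkAlgHom_rel _ h

lemma se_mul_alg (r : K) (x : Se n) : x * algebraMap K (Se n) r = r • x := by
  rw [Algebra.smul_def]; exact (Algebra.commutes r x).symm

lemma seT_quad {k : ℕ} (h1 : 1 ≤ k) (h2 : k + 1 ≤ n) :
    (SeT n k - algebraMap K (Se n) qq) * (SeT n k + algebraMap K (Se n) qq⁻¹) = 0 := by
  have h := se_rel (SeRel.quad (n := n) k h1 h2)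
  simpa [SeT, map_mul, map_sub, map_add] using h

lemma seT_sq {k : ℕ} (h1 : 1 ≤ k) (h2 : k + 1 ≤ n) :
    SeT n k * SeT n k = eps • SeT n k + 1 := by
  have h := seT_quad h1 h2
  rw [sub_mul, mul_add, mul_add, se_mul_alg, ← Algebra.smul_def, ← map_mul,
    mul_inv_cancel₀ qq_ne_zero, map_one] at h
  have h' : SeT n k * SeT n k + qq⁻¹ • SeT n k = qq • SeT n k + 1 := sub_eq_zero.mp h
  have h3 : SeT n k * SeT n k
      = (SeT n k * SeT n k + qq⁻¹ • SeT n k) - qq⁻¹ • SeT n k := by abel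
  rw [h3, h', eps]
  rw [sub_smul qq (qq⁻¹) (SeT n k)]
  abel

lemma se_tinv_t {k : ℕ} (h1 : 1 ≤ k) (h2 : k + 1 ≤ n) :
    (SeT n k - eps • 1) * SeT n k = 1 := by
  rw [sub_mul, seT_sq h1 h2, smul_mul_assoc, one_mul]; abel

lemma se_txk {k : ℕ} (h1 : 1 ≤ k) (h2 : k + 1 ≤ n) :
    SeT n k * SeX n k = SeX n (k+1) * SeT n k
      - eps • (SeX n (k+1) - SeC n k * SeC n (k+1) * SeX n k) := by
  have h := se_rel (SeRel.tx_k (n := n) k h1 h2)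
  simpa [SeT, SeC, SeX, map_mul, map_sub, map_smul] using h

lemma seX_rec {k : ℕ} (h1 : 1 ≤ k) (h2 : k + 1 ≤ n) :
    SeX n (k+1) = (SeT n k - eps • (SeC n k * SeC n (k+1))) * SeX n k * SeT n k := by
  have h := se_txk h1 h2
  have h5 : SeX n (k+1) * (SeT n k - eps • 1)
      = (SeT n k - eps • (SeC n k * SeC n (k+1))) * SeX n k := by
    rw [mul_sub, mul_smul_comm, mul_one, sub_mul, smul_mul_assoc, h]
    simp only [smul_sub]
    abel
  calc SeX n (k+1) = SeX n (k+1) * ((SeT n k - eps • 1) * SeT n k) := by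
        rw [se_tinv_t h1 h2, mul_one]
    _ = (SeX n (k+1) * (SeT n k - eps • 1)) * SeT n k := by rw [mul_assoc]
    _ = (SeT n k - eps • (SeC n k * SeC n (k+1))) * SeX n k * SeT n k := by rw [h5]

lemma seX_out {k : ℕ} (h : ¬(1 ≤ k ∧ k ≤ n)) : SeX n k = 1 := by
  have h2 := se_rel (SeRel.x_out (n := n) k h)
  simpa [SeX] using h2

lemma seY_out {k : ℕ} (h : ¬(1 ≤ k ∧ k ≤ n)) : SeY n k = 1 := by
  have h2 := se_rel (SeRel.xi_out (n := n) k h)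
  simpa [SeY] using h2

lemma seYX {k : ℕ} (h1 : 1 ≤ k) (h2 : k ≤ n) : SeY n k * SeX n k = 1 := by
  have h := se_rel (SeRel.inv_x (n := n) k h1 h2)
  simpa [SeX, SeY, map_mul] using h

end SeLemmas

section Iota

variable {n : ℕ}

/-- Values of the evaluation on generators. -/
def fg (n : ℕ) : AGen → HC n
  | AGen.t k => T n k
  | AGen.c k => C n k
  | AGen.x k => if 1 ≤ k ∧ k ≤ n then J n k else 1
  | AGen.xi k => if 1 ≤ k ∧ k ≤ n then Jinv n k else 1

/-- The evaluation map on the free algebra. -/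
def fh (n : ℕ) : FS →ₐ[K] HC n := FreeAlgebra.lift K (fg n)

lemma fh_t (k : ℕ) : fh n (Ta k) = T n k := by
  simp only [fh, Ta, FreeAlgebra.lift_ι_apply, fg]

lemma fh_c (k : ℕ) : fh n (Ca k) = C n k := by
  simp only [fh, Ca, FreeAlgebra.lift_ι_apply, fg]

lemma fh_x_in {k : ℕ} (h1 : 1 ≤ k) (h2 : k ≤ n) : fh n (Xa k) = J n k := by
  simp only [fh, Xa, FreeAlgebra.lift_ι_apply, fg]
  exact if_pos ⟨h1, h2⟩

lemma fh_x_out {k : ℕ} (h : ¬(1 ≤ k ∧ k ≤ n)) : fh n (Xa k) = 1 := by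
  simp only [fh, Xa, FreeAlgebra.lift_ι_apply, fg]
  exact if_neg h

lemma fh_xi_in {k : ℕ} (h1 : 1 ≤ k) (h2 : k ≤ n) : fh n (Ya k) = Jinv n k := by
  simp only [fh, Ya, FreeAlgebra.lift_ι_apply, fg]
  exact if_pos ⟨h1, h2⟩

lemma fh_xi_out {k : ℕ} (h : ¬(1 ≤ k ∧ k ≤ n)) : fh n (Ya k) = 1 := by
  simp only [fh, Ya, FreeAlgebra.lift_ι_apply, fg]
  exact if_neg h

lemma fh_rel : ∀ ⦃x y : FS⦄, SeRel n x y → fh n x = fh n y := by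
  intro x y h
  cases h with
  | t_out k h => rw [map_zero, fh_t]; exact T_out h
  | c_out k h => rw [map_zero, fh_c]; exact C_out h
  | x_out k h => rw [map_one]; exact fh_x_out h
  | xi_out k h => rw [map_one]; exact fh_xi_out h
  | quad k h1 h2 =>
    simp only [map_mul, map_sub, map_add, map_zero, AlgHom.commutes, fh_t]
    exact T_quad h1 h2
  | braid k h1 h2 => simp only [map_mul, fh_t]; exact t_braid h1 h2
  | t_comm k l h1 h2 h3 h4 h5 h6 h7 =>
    simp only [map_mul, fh_t]; exact tt_comm h1 h2 h3 h4 h5 h6 h7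
  | c_sq k h1 h2 => simp only [map_mul, map_neg, map_one, fh_c]; exact c_sq h1 h2
  | c_anti k l h1 h2 h3 h4 h5 =>
    simp only [map_mul, map_neg, fh_c]; exact cc_anti h1 h2 h3 h4 h5
  | tc_k k h1 h2 => simp only [map_mul, fh_t, fh_c]; exact tck h1 h2
  | tc_k1 k h1 h2 =>
    simp only [map_mul, map_sub, map_smul, fh_t, fh_c]; exact tck1 h1 h2
  | tc_out k l h1 h2 h3 h4 h5 h6 =>
    simp only [map_mul, fh_t, fh_c]; exact tcl h1 h2 h3 h4 h5 h6
  | x_inv k h1 h2 =>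
    simp only [map_mul, map_one, fh_x_in h1 h2, fh_xi_in h1 h2]; exact J_Jinv h2
  | inv_x k h1 h2 =>
    simp only [map_mul, map_one, fh_x_in h1 h2, fh_xi_in h1 h2]; exact Jinv_J h2
  | x_comm k l h1 h2 h3 h4 =>
    simp only [map_mul, fh_x_in h1 h2, fh_x_in h3 h4]; exact JJ_comm h2 h4
  | tx_k k h1 h2 =>
    have hk : k ≤ n := by omega
    simp only [map_mul, map_sub, map_smul, fh_t, fh_c, fh_x_in h1 hk,
      fh_x_in (show 1 ≤ k+1 by omega) h2]
    exact hA h1 h2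
  | tx_k1 k h1 h2 =>
    have hk : k ≤ n := by omega
    simp only [map_mul, map_sub, map_add, map_smul, map_one, fh_t, fh_c, fh_x_in h1 hk,
      fh_x_in (show 1 ≤ k+1 by omega) h2]
    exact hB h1 h2
  | tx_out k l h1 h2 h3 h4 h5 h6 =>
    simp only [map_mul, fh_t, fh_x_in h3 h4]; exact tJ_comm l k h1 h2 h3 h4 h5 h6
  | cx_k k h1 h2 =>
    simp only [map_mul, fh_c, fh_x_in h1 h2, fh_xi_in h1 h2]; exact cJk h1 h2
  | cx_out k l h1 h2 h3 h4 h5 =>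
    simp only [map_mul, fh_c, fh_x_in h3 h4]
    exact cJ_comm l k h1 h2 h3 h4 (fun h => h5 h.symm)

/-- The canonical evaluation homomorphism `Se_n(q) → G_n(q)`. -/
def iota (n : ℕ) : Se n →ₐ[K] HC n := RingQuot.liftAlgHom K ⟨fh n, fh_rel⟩

lemma iota_T (k : ℕ) : iota n (SeT n k) = T n k := by
  rw [iota, SeT, RingQuot.liftAlgHom_mkAlgHom_apply]; exact fh_t k

lemma iota_C (k : ℕ) : iota n (SeC n k) = C n k := by
  rw [iota, SeC, RingQuot.liftAlgHom_mkAlgHom_apply]; exact fh_c k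

lemma iota_X1 (hn : 1 ≤ n) : iota n (SeX n 1) = 1 := by
  rw [iota, SeX, RingQuot.liftAlgHom_mkAlgHom_apply, fh_x_in le_rfl hn, J_one]

lemma forced (ι : Se n →ₐ[K] HC n) (hT : ∀ k, ι (SeT n k) = T n k)
    (hC : ∀ k, ι (SeC n k) = C n k) (hX1 : ι (SeX n 1) = 1) :
    ∀ k, 1 ≤ k → k ≤ n → ι (SeX n k) = J n k := by
  intro k
  induction k with
  | zero => omega
  | succ k ih =>
    intro _ hk
    rcases Nat.eq_zero_or_pos k with rfl | hk1
    · simp only [Nat.zero_add]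
      rw [J_one]; exact hX1
    · have hkn : k ≤ n := by omega
      rw [seX_rec hk1 hk, map_mul, map_mul, map_sub, map_smul, map_mul, hT, hC, hC,
        ih hk1 hkn]
      exact (J_succ hk1).symm

lemma forcedY (ι : Se n →ₐ[K] HC n) (hT : ∀ k, ι (SeT n k) = T n k)
    (hC : ∀ k, ι (SeC n k) = C n k) (hX1 : ι (SeX n 1) = 1)
    {k : ℕ} (h1 : 1 ≤ k) (h2 : k ≤ n) : ι (SeY n k) = Jinv n k := by
  have hx := forced ι hT hC hX1 k h1 h2
  have hYJ : ι (SeY n k) * J n k = 1 := by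
    rw [← hx, ← map_mul, seYX h1 h2, map_one]
  calc ι (SeY n k) = ι (SeY n k) * (J n k * Jinv n k) := by rw [J_Jinv h2, mul_one]
    _ = (ι (SeY n k) * J n k) * Jinv n k := by rw [mul_assoc]
    _ = Jinv n k := by rw [hYJ, one_mul]

end Iota
theorem statement6 (n : ℕ) (hn : 1 ≤ n) :
    (∃! ι : Se n →ₐ[K] HC n,
      (∀ k, ι (SeT n k) = T n k) ∧ (∀ k, ι (SeC n k) = C n k) ∧ ι (SeX n 1) = 1) ∧
    (∀ ι : Se n →ₐ[K] HC n,
      ((∀ k, ι (SeT n k) = T n k) ∧ (∀ k, ι (SeC n k) = C n k) ∧ ι (SeX n 1) = 1) →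
      ∀ k, 1 ≤ k → k ≤ n → ι (SeX n k) = J n k) := by
  have huniq : ∀ g : Se n →ₐ[K] HC n,
      ((∀ k, g (SeT n k) = T n k) ∧ (∀ k, g (SeC n k) = C n k) ∧ g (SeX n 1) = 1) →
      g = iota n := by
    rintro g ⟨hgT, hgC, hgX1⟩
    have hcomp : g.comp (RingQuot.mkAlgHom K (SeRel n))
        = (iota n).comp (RingQuot.mkAlgHom K (SeRel n)) := by
      apply FreeAlgebra.hom_ext
      funext a
      cases a with
      | t k =>
        show g (SeT n k) = iota n (SeT n k)
        rw [hgT k, iota_T k]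
      | c k =>
        show g (SeC n k) = iota n (SeC n k)
        rw [hgC k, iota_C k]
      | x k =>
        show g (SeX n k) = iota n (SeX n k)
        by_cases hk : 1 ≤ k ∧ k ≤ n
        · rw [forced g hgT hgC hgX1 k hk.1 hk.2,
            forced (iota n) (fun k => iota_T k) (fun k => iota_C k) (iota_X1 hn) k hk.1 hk.2]
        · rw [seX_out hk, map_one, map_one]
      | xi k =>
        show g (SeY n k) = iota n (SeY n k)
        by_cases hk : 1 ≤ k ∧ k ≤ n
        · rw [forcedY g hgT hgC hgX1 hk.1 hk.2,
            forcedY (iota n) (fun k => iota_T k) (fun k => iota_C k) (iota_X1 hn) hk.1 hk.2]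
        · rw [seY_out hk, map_one, map_one]
    apply AlgHom.ext
    intro x
    obtain ⟨y, rfl⟩ := RingQuot.mkAlgHom_surjective K (SeRel n) x
    exact DFunLike.congr_fun hcomp y
  constructor
  · exact ⟨iota n, ⟨fun k => iota_T k, fun k => iota_C k, iota_X1 hn⟩,
      fun g hg => huniq g hg⟩
  · intro ι hι k h1 h2
    exact forced ι hι.1 hι.2.1 hι.2.2 k h1 h2

end Sergeev
end
end

section
/- (a) If the pair (x,y) satisfies the idempotency condition and y ≠ x, x⁻¹, then ψ_k(x,y)² = −ε·(x+y)/(x−y)·ψ_k(x,y). (b) If the pair (x,y) does not satisfy the idempotency condition and y ≠ x, x⁻¹, then ψ_k(x,y) is invertible with inverse ψ_k(x,y)⁻¹ = [ 1 − ε²·( x⁻¹y/(x⁻¹y − 1)² + xy/(xy − 1)² ) ]⁻¹ · ψ_k(y,x). -/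
/-!
Common definitions for formalizing "Affine Sergeev Algebra and q-Analogues of the
Young Symmetrizers for Projective Representations of the Symmetric Group"
by A. R. Jones and M. L. Nazarov.
-/

set_option maxHeartbeats 1600000
set_option synthInstance.maxHeartbeats 1000000

noncomputable section
open scoped TensorProduct

namespace Sergeev

/-! ## The algebraic closure `𝕂` of `ℂ(q)` and the scalar extension `G_n(q) ⊗ 𝕂`. -/

/-- `𝕂`, the algebraic closure of `ℂ(q)`. -/
abbrev AC : Type := AlgebraicClosure K

/-- `G_n(q) ⊗_{ℂ(q)} 𝕂`. -/
abbrev HCbar (n : ℕ) : Type := AC ⊗[K] HC n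

def ofHC (n : ℕ) : HC n →ₐ[K] HCbar n := Algebra.TensorProduct.includeRight

def Tb (n k : ℕ) : HCbar n := ofHC n (T n k)
def Cb (n k : ℕ) : HCbar n := ofHC n (C n k)

def epsA : AC := algebraMap K AC eps
def qA : AC := algebraMap K AC qq

/-- `[m]_{q²} = (q^{2m} - q^{-2m})/(q² - q^{-2})`. -/
def br (m : ℕ) : AC := (qA ^ (2*m) - qA⁻¹ ^ (2*m)) / (qA ^ 2 - qA⁻¹ ^ 2)

lemma exists_sq (m : ℕ) : ∃ x : AC, x ^ 2 = br m :=
  IsAlgClosed.exists_pow_nat_eq (br m) (n := 2) (by norm_num)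

/-- A fixed square root `√[m]_{q²} ∈ 𝕂`. -/
def sq (m : ℕ) : AC := Classical.choose (exists_sq m)

lemma sq_spec (m : ℕ) : sq m ^ 2 = br m := Classical.choose_spec (exists_sq m)

/-- `[m+1]_{q²} - [m]_{q²} - ε √([m+1]_{q²} [m]_{q²})`, the special-point coordinate attached to
a box of content `m`. -/
def qval (m : ℕ) : AC := br (m+1) - br m - epsA * (sq (m+1) * sq m)

/-- The elements `ψ_k(x,y) = T_k + ε/(x⁻¹y - 1) + ε/(xy - 1)·C_k C_{k+1}` of `G_n(q) ⊗ 𝕂`. -/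
def psie (n k : ℕ) (x y : AC) : HCbar n :=
  Tb n k + algebraMap AC (HCbar n) (epsA * (x⁻¹ * y - 1)⁻¹)
    + algebraMap AC (HCbar n) (epsA * (x * y - 1)⁻¹) * (Cb n k * Cb n (k+1))

/-- The idempotency condition `x⁻¹y/(x⁻¹y - 1)² + xy/(xy - 1)² = 1/ε²` on a pair `(x,y)`. -/
def idemCond (x y : AC) : Prop :=
  x⁻¹ * y / (x⁻¹ * y - 1)^2 + x * y / (x * y - 1)^2 = (epsA * epsA)⁻¹

/-- The set `𝒳` of generic `n`-tuples: `x_k ≠ 0` and `x_k ≠ x_l^{±1}` for `k ≠ l`. -/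
def genericSet (n : ℕ) : Set (ℕ → AC) :=
  {x | (∀ k, 1 ≤ k → k ≤ n → x k ≠ 0) ∧
    ∀ k l, 1 ≤ k → k ≤ n → 1 ≤ l → l ≤ n → k ≠ l → x k ≠ x l ∧ x k * x l ≠ 1}

/-- `f : 𝕂ⁿ → G_n(q) ⊗ 𝕂` is a polynomial map (in the variables `x 1, …, x n`). -/
def IsPolyMap (n : ℕ) (f : (ℕ → AC) → HCbar n) : Prop :=
  ∃ (s : Finset (MvPolynomial (Fin n) AC)) (c : MvPolynomial (Fin n) AC → HCbar n),
    ∀ x, f x = ∑ p ∈ s, MvPolynomial.eval (fun i : Fin n => x (i.1+1)) p • c p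

/-- `a` is the value at `y` of the (regular continuation of the) restriction of the rational
function `f` to the subset `S`: there is a presentation `f = N/d` valid on `S`, with `N` a
polynomial map and `d` a scalar polynomial not vanishing at `y`, and `a = N(y)/d(y)`. -/
def RegValueOn (n : ℕ) (f : (ℕ → AC) → HCbar n) (S : Set (ℕ → AC)) (y : ℕ → AC)
    (a : HCbar n) : Prop :=
  ∃ (N : (ℕ → AC) → HCbar n) (d : MvPolynomial (Fin n) AC),
    IsPolyMap n N ∧
    MvPolynomial.eval (fun i : Fin n => y (i.1+1)) d ≠ 0 ∧
    (∀ x ∈ S, MvPolynomial.eval (fun i : Fin n => x (i.1+1)) d • f x = N x) ∧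
    a = (MvPolynomial.eval (fun i : Fin n => y (i.1+1)) d)⁻¹ • N y

/-! With `t = T_k` and `d = C_k C_{k+1}` one has `t² = 1 + ε t`, `d² = -1` and
`t d = -d t + ε d - ε`, whence
`(t + a + b d)(t + a' + b d) = (1 + a a' - b² - b ε) + (ε + a + a')(t + b d)`.
The coefficients `a, a'` of `ψ_k(x,y)` and `ψ_k(y,x)` satisfy `a + a' = -ε`, so their product
is the scalar `1 - a(a + ε) - b(b + ε) = 1 - ε²(x⁻¹y/(x⁻¹y - 1)² + xy/(xy - 1)²)`. For `a' = a`
the product is a multiple of `ψ_k(x,y)` exactly when `a(a + ε) + b(b + ε) = 1`, which is the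
idempotency condition. -/

theorem isUnit_and_inverse_eq_of_mul_eq_algebraMap {F A : Type*} [Field F] [Ring A]
    [Algebra F A] {p p' : A} {c : F} (hc : c ≠ 0) (hpp' : p * p' = algebraMap F A c)
    (hp'p : p' * p = algebraMap F A c) :
    IsUnit p ∧ Ring.inverse p = algebraMap F A c⁻¹ * p' := by
  have hinv : algebraMap F A c⁻¹ * algebraMap F A c = 1 := by
    rw [← map_mul, inv_mul_cancel₀ hc, map_one]
  let u : Aˣ :=
    { val := p
      inv := algebraMap F A c⁻¹ * p'
      val_inv := by rw [← mul_assoc, ← Algebra.commutes, mul_assoc, hpp', hinv]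
      inv_val := by rw [mul_assoc, hp'p, hinv] }
  exact ⟨u.isUnit, Ring.inverse_unit u⟩

structure IsHeckeCliffordPair {R A : Type*} [CommRing R] [Ring A] [Algebra R A]
    (e : R) (t d : A) : Prop where
  mul_self_fst : t * t = 1 + e • t
  mul_self_snd : d * d = -1
  fst_mul_snd : t * d = -(d * t) + e • d - algebraMap R A e

namespace IsHeckeCliffordPair

variable {R A : Type*} [CommRing R] [Ring A] [Algebra R A] {e : R} {t d : A}

theorem mul_eq (h : IsHeckeCliffordPair e t d) (a a' b : R) :
    (t + algebraMap R A a + algebraMap R A b * d) * (t + algebraMap R A a' + algebraMap R A b * d)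
      = algebraMap R A (1 + a * a' - b * b - b * e) + (e + a + a') • (t + b • d) := by
  simp only [Algebra.algebraMap_eq_smul_one, smul_mul_assoc, one_mul, add_mul, mul_add,
    mul_smul_comm, mul_one, smul_add, smul_smul, h.mul_self_fst, h.mul_self_snd, h.fst_mul_snd]
  module

theorem mul_self_eq (h : IsHeckeCliffordPair e t d) {a b : R}
    (hab : a * (a + e) + b * (b + e) = 1) :
    (t + algebraMap R A a + algebraMap R A b * d) * (t + algebraMap R A a + algebraMap R A b * d)
      = algebraMap R A (e + 2 * a) * (t + algebraMap R A a + algebraMap R A b * d) := by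
  rw [h.mul_eq, ← Algebra.smul_def, show 1 + a * a - b * b - b * e = (e + 2 * a) * a by
    linear_combination -hab]
  simp only [Algebra.algebraMap_eq_smul_one, smul_add, smul_smul, smul_mul_assoc, one_mul]
  module

theorem mul_eq_algebraMap (h : IsHeckeCliffordPair e t d) {a a' : R} (haa' : a + a' = -e)
    (b : R) :
    (t + algebraMap R A a + algebraMap R A b * d) * (t + algebraMap R A a' + algebraMap R A b * d)
      = algebraMap R A (1 - (a * (a + e) + b * (b + e))) := by
  rw [h.mul_eq, show e + a + a' = 0 by linear_combination haa', zero_smul, add_zero,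
    show a' = -(a + e) by linear_combination haa']
  congr 1
  ring

theorem isUnit_and_inverse_eq {F A : Type*} [Field F] [Ring A] [Algebra F A] {e : F} {t d : A}
    (h : IsHeckeCliffordPair e t d) {a a' : F} (haa' : a + a' = -e) (b : F)
    (hc : 1 - (a * (a + e) + b * (b + e)) ≠ 0) :
    IsUnit (t + algebraMap F A a + algebraMap F A b * d) ∧
      Ring.inverse (t + algebraMap F A a + algebraMap F A b * d) =
        algebraMap F A (1 - (a * (a + e) + b * (b + e)))⁻¹
          * (t + algebraMap F A a' + algebraMap F A b * d) := by
  have ha'a : a' * (a' + e) = a * (a + e) := by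
    rw [show a' = -e - a by linear_combination haa']
    ring
  refine isUnit_and_inverse_eq_of_mul_eq_algebraMap hc (h.mul_eq_algebraMap haa' b) ?_
  rw [← ha'a]
  exact h.mul_eq_algebraMap (by rw [add_comm, haa']) b

end IsHeckeCliffordPair

theorem mul_self_eq_one_add_smul_of_quadratic {F A : Type*} [Field F] [Ring A] [Algebra F A]
    {q : F} (hq : q ≠ 0) {t : A} (h : (t - algebraMap F A q) * (t + algebraMap F A q⁻¹) = 0) :
    t * t = 1 + (q - q⁻¹) • t := by
  simp only [Algebra.algebraMap_eq_smul_one, sub_mul, mul_add, smul_mul_assoc, mul_smul_comm,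
    one_mul, mul_one, smul_sub, smul_smul, inv_mul_cancel₀ hq, one_smul] at h
  linear_combination (norm := module) h

theorem mul_mul_self_eq_neg_one {A : Type*} [Ring A] {c c' : A} (hc : c * c = -1)
    (hc' : c' * c' = -1) (hcc' : c * c' = -(c' * c)) : (c * c') * (c * c') = -1 := by
  have hc'c : c' * c = -(c * c') := by rw [hcc', neg_neg]
  calc c * c' * (c * c') = c * (c' * c) * c' := by noncomm_ring
    _ = -(c * c * (c' * c')) := by rw [hc'c]; noncomm_ring
    _ = -1 := by rw [hc, hc']; noncomm_ring

theorem mul_mul_eq_of_twisted_comm {R A : Type*} [CommRing R] [Ring A] [Algebra R A] {e : R}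
    {t c c' : A} (htc : t * c = c' * t) (htc' : t * c' = c * t - e • (c - c'))
    (hcc' : c * c' = -(c' * c)) (hc' : c' * c' = -1) :
    t * (c * c') = -((c * c') * t) + e • (c * c') - algebraMap R A e := by
  have hc'c : c' * c = -(c * c') := by rw [hcc', neg_neg]
  calc t * (c * c') = c' * (t * c') := by rw [← mul_assoc, htc, mul_assoc]
    _ = (c' * c) * t - e • (c' * c) + e • (c' * c') := by
      rw [htc', mul_sub, mul_smul_comm, mul_sub, ← mul_assoc]; module
    _ = -((c * c') * t) + e • (c * c') - algebraMap R A e := by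
      rw [hc'c, hc', neg_mul, Algebra.algebraMap_eq_smul_one]; module

theorem mul_inv_sub_one_mul_add {F : Type*} [Field F] (e u : F) :
    e * (u - 1)⁻¹ * (e * (u - 1)⁻¹ + e) = e ^ 2 * (u / (u - 1) ^ 2) := by
  rcases eq_or_ne u 1 with rfl | hu
  · simp
  · field_simp [sub_ne_zero.mpr hu]
    ring

theorem inv_mul_sub_one_eq_div {F : Type*} [Field F] {x : F} (hx : x ≠ 0) (y : F) :
    x⁻¹ * y - 1 = (y - x) / x := by
  field_simp

theorem inv_inv_mul_sub_one_add_inv_inv_mul_sub_one {F : Type*} [Field F] {x y : F} (hx : x ≠ 0)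
    (hy : y ≠ 0) (hxy : y ≠ x) : (x⁻¹ * y - 1)⁻¹ + (y⁻¹ * x - 1)⁻¹ = -1 := by
  have hyx : y - x ≠ 0 := sub_ne_zero.mpr hxy
  rw [inv_mul_sub_one_eq_div hx, inv_mul_sub_one_eq_div hy, inv_div, inv_div, ← neg_sub y x,
    div_neg]
  field_simp
  ring

theorem add_two_mul_mul_inv_inv_mul_sub_one {F : Type*} [Field F] (e : F) {x y : F} (hx : x ≠ 0)
    (hxy : y ≠ x) : e + 2 * (e * (x⁻¹ * y - 1)⁻¹) = -(e * ((x + y) / (x - y))) := by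
  have hyx : y - x ≠ 0 := sub_ne_zero.mpr hxy
  have hxy' : x - y ≠ 0 := sub_ne_zero.mpr hxy.symm
  field_simp
  ring

theorem eps_ne_zero : eps ≠ 0 := by
  intro h
  have hX : (RatFunc.X : K) * RatFunc.X = 1 := by
    have hq : qq = qq⁻¹ := sub_eq_zero.mp h
    rw [← mul_inv_cancel₀ (RatFunc.X_ne_zero : (RatFunc.X : K) ≠ 0)]
    exact congrArg (RatFunc.X * ·) hq
  simpa [RatFunc.intDegree_mul RatFunc.X_ne_zero RatFunc.X_ne_zero, RatFunc.intDegree_X]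
    using congrArg RatFunc.intDegree hX

theorem epsA_ne_zero : epsA ≠ 0 :=
  (map_ne_zero (algebraMap K AC)).mpr eps_ne_zero

theorem idemCond_iff {x y : AC} :
    idemCond x y ↔
      epsA ^ 2 * (x⁻¹ * y / (x⁻¹ * y - 1) ^ 2 + x * y / (x * y - 1) ^ 2) = 1 := by
  rw [idemCond, ← pow_two, ← mul_eq_one_iff_eq_inv₀ (pow_ne_zero 2 epsA_ne_zero),
    mul_comm (epsA ^ 2)]

theorem ofHC_mkAlgHom_eq_of_rel {n : ℕ} {a b : FG} (h : HCRel n a b) :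
    ofHC n (RingQuot.mkAlgHom K (HCRel n) a) = ofHC n (RingQuot.mkAlgHom K (HCRel n) b) := by
  rw [RingQuot.mkAlgHom_rel K h]

theorem isHeckeCliffordPair_Tb_Cb {n k : ℕ} (hk : 1 ≤ k) (hk2 : k + 1 ≤ n) :
    IsHeckeCliffordPair epsA (Tb n k) (Cb n k * Cb n (k + 1)) := by
  have hquad := ofHC_mkAlgHom_eq_of_rel (HCRel.quad (n := n) k hk hk2)
  have hsq := ofHC_mkAlgHom_eq_of_rel (HCRel.c_sq (n := n) k hk (by omega))
  have hsq' := ofHC_mkAlgHom_eq_of_rel (HCRel.c_sq (n := n) (k + 1) (by omega) hk2)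
  have hanti := ofHC_mkAlgHom_eq_of_rel
    (HCRel.c_anti (n := n) k (k + 1) hk (by omega) (by omega) hk2 (by omega))
  have htc := ofHC_mkAlgHom_eq_of_rel (HCRel.tc_k (n := n) k hk hk2)
  have htc' := ofHC_mkAlgHom_eq_of_rel (HCRel.tc_k1 (n := n) k hk hk2)
  have hT : ∀ j, ofHC n (RingQuot.mkAlgHom K (HCRel n) (Tf j)) = Tb n j := fun _ => rfl
  have hC : ∀ j, ofHC n (RingQuot.mkAlgHom K (HCRel n) (Cf j)) = Cb n j := fun _ => rfl
  simp only [map_mul, map_sub, map_add, map_neg, map_one, map_zero, map_smul, AlgHom.commutes,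
    hT, hC] at hquad hsq hsq' hanti htc htc'
  have heps : ∀ z : HCbar n, eps • z = epsA • z := fun z => (algebraMap_smul AC eps z).symm
  rw [heps] at htc'
  refine ⟨?_, mul_mul_self_eq_neg_one hsq hsq' hanti,
    mul_mul_eq_of_twisted_comm htc htc' hanti hsq'⟩
  rw [mul_self_eq_one_add_smul_of_quadratic RatFunc.X_ne_zero hquad]
  exact congrArg (1 + ·) (heps _)

theorem statement8_general (n : ℕ) (k : ℕ) (hk : 1 ≤ k) (hk2 : k + 1 ≤ n) (x y : AC)
    (hx : x ≠ 0) (hy : y ≠ 0) (hxy : y ≠ x) :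
    (idemCond x y →
      psie n k x y * psie n k x y =
        - algebraMap AC (HCbar n) (epsA * ((x + y) / (x - y))) * psie n k x y) ∧
    (¬ idemCond x y →
      IsUnit (psie n k x y) ∧
      Ring.inverse (psie n k x y) =
        algebraMap AC (HCbar n)
          ((1 - epsA ^ 2 * (x⁻¹ * y / (x⁻¹ * y - 1) ^ 2 + x * y / (x * y - 1) ^ 2))⁻¹)
          * psie n k y x) := by
  have hpair := isHeckeCliffordPair_Tb_Cb hk hk2
  have hS : epsA * (x⁻¹ * y - 1)⁻¹ * (epsA * (x⁻¹ * y - 1)⁻¹ + epsA)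
      + epsA * (x * y - 1)⁻¹ * (epsA * (x * y - 1)⁻¹ + epsA) =
      epsA ^ 2 * (x⁻¹ * y / (x⁻¹ * y - 1) ^ 2 + x * y / (x * y - 1) ^ 2) := by
    rw [mul_inv_sub_one_mul_add, mul_inv_sub_one_mul_add, mul_add]
  set a := epsA * (x⁻¹ * y - 1)⁻¹
  set a' := epsA * (y⁻¹ * x - 1)⁻¹
  set b := epsA * (x * y - 1)⁻¹
  refine ⟨fun hidem => ?_, fun hidem => ?_⟩
  · rw [← map_neg, ← add_two_mul_mul_inv_inv_mul_sub_one epsA hx hxy]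
    exact hpair.mul_self_eq (hS.trans (idemCond_iff.mp hidem))
  · have haa' : a + a' = -epsA := by
      rw [← mul_add, inv_inv_mul_sub_one_add_inv_inv_mul_sub_one hx hy hxy, mul_neg_one]
    have hyx : psie n k y x = Tb n k + algebraMap AC (HCbar n) a'
        + algebraMap AC (HCbar n) b * (Cb n k * Cb n (k + 1)) := by
      rw [psie, mul_comm y x]
    rw [hyx, ← hS]
    refine hpair.isUnit_and_inverse_eq haa' b ?_
    rw [hS]
    exact sub_ne_zero.mpr (Ne.symm (mt idemCond_iff.mpr hidem))

theorem statement8 (n : ℕ) (k : ℕ) (hk : 1 ≤ k) (hk2 : k + 1 ≤ n) (x y : AC)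
    (hx : x ≠ 0) (hy : y ≠ 0) (hxy : y ≠ x) (hxy' : y ≠ x⁻¹) :
    (idemCond x y →
      psie n k x y * psie n k x y =
        - algebraMap AC (HCbar n) (epsA * ((x + y) / (x - y))) * psie n k x y) ∧
    (¬ idemCond x y →
      IsUnit (psie n k x y) ∧
      Ring.inverse (psie n k x y) =
        algebraMap AC (HCbar n)
          ((1 - epsA ^ 2 * (x⁻¹ * y / (x⁻¹ * y - 1) ^ 2 + x * y / (x * y - 1) ^ 2))⁻¹)
          * psie n k y x) :=
  statement8_general n k hk hk2 x y hx hy hxy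

end Sergeev
end
end
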